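/- arXiv:2605.30891 — 3 statements merged into one kernel-verified Lean document; each statement's English description precedes it below -/
import Mathlib

section
/- For every k ≥ 1, min_{1 ≤ i ≤ k} ‖∇f(x_i)‖ ≤ (2/k) · (∑_{i=0}^{k−1} λ_i)^{1/p} · (12Δ + 2M ∑_{i=0}^{k−1} (M/λ_i)^{3/(p−3)})^{1−1/p}, for any choice of positive parameters λ_0, …, λ_{k−1}. -/
/-!
Each step satisfies two estimates in `r = ‖s‖`: by the cubic Taylor bound the function
decreases, `f(x⁺) ≤ f(x) - λ r^p / 4 + M r³ / 6`, and by the quadratic Taylor bound for the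
gradient, `‖∇f(x⁺)‖ ≤ M r² / 2 + 3 λ r^(p-1) / 2`. Since `M r³ ≤ λ r^p + M Q` with
`Q = (M/λ)^(3/(p-3))`, telescoping the decrease gives `∑ λ_i r_i^p ≤ 12 Δ + 2 M ∑ Q_i =: A`.
Both gradient terms have the form `λ^(1/p) Y^(1-1/p)` with `∑ Y ≤ A`: for `λ r^(p-1)` take
`Y = λ r^p`, and for `M r²` weighted AM-GM gives
`Y ≤ 2/(p-1) · λ r^p + (p-3)/(p-1) · M Q`. Hölder's inequality then bounds the sum of the
gradient norms, and the minimum is at most their average.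
-/

open scoped RealInnerProductSpace
open Finset

theorem norm_image_one_le_of_norm_deriv_le_mul_pow {F : Type*} [NormedAddCommGroup F]
    [NormedSpace ℝ F] {φ φ' : ℝ → F} {C : ℝ} (n : ℕ) (hφ : ∀ τ, HasDerivAt φ (φ' τ) τ)
    (h0 : φ 0 = 0) (hbound : ∀ τ ∈ Set.Ico (0 : ℝ) 1, ‖φ' τ‖ ≤ C * τ ^ n) :
    ‖φ 1‖ ≤ C / (n + 1) := by
  have hB : ∀ τ : ℝ, HasDerivAt (fun τ => C / (n + 1) * τ ^ (n + 1)) (C * τ ^ n) τ := by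
    intro τ
    refine ((hasDerivAt_pow (n + 1) τ).const_mul (C / (n + 1))).congr_deriv ?_
    rw [Nat.add_sub_cancel]
    push_cast
    field_simp
  simpa using image_norm_le_of_norm_deriv_right_le_deriv_boundary
    (fun τ _ => (hφ τ).continuousAt.continuousWithinAt) (fun τ _ => (hφ τ).hasDerivWithinAt)
    (by simp [h0]) hB hbound (Set.right_mem_Icc.2 zero_le_one)

theorem hasDerivAt_add_smul {E : Type*} [NormedAddCommGroup E] [NormedSpace ℝ E] (x s : E)
    (τ : ℝ) : HasDerivAt (fun τ : ℝ => x + τ • s) s τ := by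
  simpa using ((hasDerivAt_id τ).smul_const s).const_add x

theorem norm_sub_sub_fderiv_apply_le {E F : Type*} [NormedAddCommGroup E] [NormedSpace ℝ E]
    [NormedAddCommGroup F] [NormedSpace ℝ F] {g : E → F} {H : E → E →L[ℝ] F} {M : ℝ}
    (hg : ∀ y, HasFDerivAt g (H y) y) (hlip : ∀ y z, ‖H y - H z‖ ≤ M * ‖y - z‖) (x s : E) :
    ‖g (x + s) - g x - H x s‖ ≤ M / 2 * ‖s‖ ^ 2 := by
  have hderiv : ∀ τ : ℝ, HasDerivAt (fun τ : ℝ => g (x + τ • s) - g x - τ • H x s)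
      (H (x + τ • s) s - H x s) τ := fun τ =>
    (((hg _).comp_hasDerivAt τ (hasDerivAt_add_smul x s τ)).sub_const (g x)).sub
      (by simpa using (hasDerivAt_id τ).smul_const (H x s))
  have hbound : ∀ τ ∈ Set.Ico (0 : ℝ) 1, ‖H (x + τ • s) s - H x s‖ ≤ M * ‖s‖ ^ 2 * τ ^ 1 := by
    intro τ hτ
    calc ‖H (x + τ • s) s - H x s‖ = ‖(H (x + τ • s) - H x) s‖ := rfl
      _ ≤ ‖H (x + τ • s) - H x‖ * ‖s‖ := ContinuousLinearMap.le_opNorm _ _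
      _ ≤ M * (τ * ‖s‖) * ‖s‖ := by
        gcongr
        simpa [norm_smul, abs_of_nonneg hτ.1] using hlip (x + τ • s) x
      _ = M * ‖s‖ ^ 2 * τ ^ 1 := by ring
  have := norm_image_one_le_of_norm_deriv_le_mul_pow 1 hderiv (by simp) hbound
  norm_num at this
  linarith

theorem image_add_le_of_hessian_lipschitz {E : Type*} [NormedAddCommGroup E]
    [InnerProductSpace ℝ E] [CompleteSpace E] {f : E → ℝ} {f' : E → E} {H : E → E →L[ℝ] E}
    {M : ℝ} (hf : ∀ y, HasGradientAt f (f' y) y) (hf' : ∀ y, HasFDerivAt f' (H y) y)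
    (hlip : ∀ y z, ‖H y - H z‖ ≤ M * ‖y - z‖) (x s : E) :
    f (x + s) ≤ f x + ⟪f' x, s⟫ + 1 / 2 * ⟪H x s, s⟫ + M / 6 * ‖s‖ ^ 3 := by
  have hderiv : ∀ τ : ℝ, HasDerivAt
      (fun τ : ℝ => f (x + τ • s) - f x - τ * ⟪f' x, s⟫ - τ ^ 2 / 2 * ⟪H x s, s⟫)
      ⟪f' (x + τ • s) - f' x - H x (τ • s), s⟫ τ := by
    intro τ
    have hfτ : HasDerivAt (fun τ : ℝ => f (x + τ • s)) ⟪f' (x + τ • s), s⟫ τ := by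
      simpa [Function.comp_def] using
        (hf _).hasFDerivAt.comp_hasDerivAt τ (hasDerivAt_add_smul x s τ)
    refine (((hfτ.sub_const (f x)).sub ((hasDerivAt_id τ).mul_const _)).sub
      (((hasDerivAt_pow 2 τ).div_const 2).mul_const _)).congr_deriv ?_
    simp only [inner_sub_left, map_smul, real_inner_smul_left]
    ring
  have hbound : ∀ τ ∈ Set.Ico (0 : ℝ) 1,
      ‖⟪f' (x + τ • s) - f' x - H x (τ • s), s⟫‖ ≤ M / 2 * ‖s‖ ^ 3 * τ ^ 2 := by
    intro τ hτ
    calc ‖⟪f' (x + τ • s) - f' x - H x (τ • s), s⟫‖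
        ≤ ‖f' (x + τ • s) - f' x - H x (τ • s)‖ * ‖s‖ := norm_inner_le_norm _ _
      _ ≤ M / 2 * ‖τ • s‖ ^ 2 * ‖s‖ := by
        gcongr
        exact norm_sub_sub_fderiv_apply_le hf' hlip x (τ • s)
      _ = M / 2 * ‖s‖ ^ 3 * τ ^ 2 := by
        rw [norm_smul, Real.norm_of_nonneg hτ.1]
        ring
  have := norm_image_one_le_of_norm_deriv_le_mul_pow 2 hderiv (by simp) hbound
  norm_num at this
  linarith [le_abs_self (f (x + s) - f x - ⟪f' x, s⟫ - 2⁻¹ * ⟪H x s, s⟫)]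

theorem norm_rpow_sub_two_smul {E : Type*} [NormedAddCommGroup E] [NormedSpace ℝ E] {p c : ℝ}
    (hp : 1 < p) (hc : 0 ≤ c) (s : E) : ‖(c * ‖s‖ ^ (p - 2)) • s‖ = c * ‖s‖ ^ (p - 1) := by
  rw [norm_smul, Real.norm_of_nonneg (by positivity), mul_assoc,
    ← Real.rpow_add_one' (norm_nonneg s) (by linarith)]
  ring_nf

theorem inner_rpow_sub_two_smul_self {E : Type*} [NormedAddCommGroup E] [InnerProductSpace ℝ E]
    {p c : ℝ} (hp : 1 < p) (s : E) : ⟪(c * ‖s‖ ^ (p - 2)) • s, s⟫ = c * ‖s‖ ^ p := by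
  rw [real_inner_smul_left, real_inner_self_eq_norm_mul_norm, mul_assoc, ← mul_assoc (_ ^ _),
    ← Real.rpow_add_one' (norm_nonneg s) (by linarith),
    ← Real.rpow_add_one' (norm_nonneg s) (by linarith)]
  ring_nf

theorem norm_gradient_add_le_of_step {E : Type*} [NormedAddCommGroup E] [NormedSpace ℝ E]
    {f' : E → E} {H : E → E →L[ℝ] E} {M : ℝ}
    (hf' : ∀ y, HasFDerivAt f' (H y) y) (hlip : ∀ y z, ‖H y - H z‖ ≤ M * ‖y - z‖)
    {p c : ℝ} (hp : 1 < p) (hc : 0 ≤ c) {x s : E}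
    (hstep : ‖f' x + H x s + (c * ‖s‖ ^ (p - 2)) • s‖ ≤ c / 2 * ‖s‖ ^ (p - 1)) :
    ‖f' (x + s)‖ ≤ M / 2 * ‖s‖ ^ 2 + 3 * c / 2 * ‖s‖ ^ (p - 1) := by
  have hsplit : f' (x + s) = (f' (x + s) - f' x - H x s)
      + (f' x + H x s + (c * ‖s‖ ^ (p - 2)) • s) - (c * ‖s‖ ^ (p - 2)) • s := by abel
  calc ‖f' (x + s)‖ ≤ ‖f' (x + s) - f' x - H x s‖
        + ‖f' x + H x s + (c * ‖s‖ ^ (p - 2)) • s‖ + ‖(c * ‖s‖ ^ (p - 2)) • s‖ := by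
        conv_lhs => rw [hsplit]
        exact norm_sub_le_of_le (norm_add_le _ _) le_rfl
    _ ≤ M / 2 * ‖s‖ ^ 2 + c / 2 * ‖s‖ ^ (p - 1) + c * ‖s‖ ^ (p - 1) := by
        gcongr
        · exact norm_sub_sub_fderiv_apply_le hf' hlip x s
        · exact (norm_rpow_sub_two_smul hp hc s).le
    _ = M / 2 * ‖s‖ ^ 2 + 3 * c / 2 * ‖s‖ ^ (p - 1) := by ring

theorem image_add_le_of_step {E : Type*} [NormedAddCommGroup E]
    [InnerProductSpace ℝ E] [CompleteSpace E] {f : E → ℝ} {f' : E → E} {H : E → E →L[ℝ] E}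
    {M : ℝ} (hf : ∀ y, HasGradientAt f (f' y) y) (hf' : ∀ y, HasFDerivAt f' (H y) y)
    (hlip : ∀ y z, ‖H y - H z‖ ≤ M * ‖y - z‖) {p c : ℝ} (hp : 1 < p) {x s : E}
    (hstep : ‖f' x + H x s + (c * ‖s‖ ^ (p - 2)) • s‖ ≤ c / 2 * ‖s‖ ^ (p - 1))
    (hdesc : ⟪f' x, s⟫ ≤ 0) :
    f (x + s) ≤ f x - c / 4 * ‖s‖ ^ p + M / 6 * ‖s‖ ^ 3 := by
  have hmodel : ⟪f' x, s⟫ + ⟪H x s, s⟫ ≤ -(c / 2 * ‖s‖ ^ p) := by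
    have h := (real_inner_le_norm (f' x + H x s + (c * ‖s‖ ^ (p - 2)) • s) s).trans
      (mul_le_mul_of_nonneg_right hstep (norm_nonneg s))
    rw [mul_assoc, ← Real.rpow_add_one' (norm_nonneg s) (by linarith), sub_add_cancel,
      inner_add_left, inner_add_left, inner_rpow_sub_two_smul_self hp] at h
    linarith
  linarith [image_add_le_of_hessian_lipschitz hf hf' hlip x s]

theorem mul_pow_three_le_add {M c r p : ℝ} (hM : 0 ≤ M) (hc : 0 < c) (hp : 3 < p) (hr : 0 ≤ r) :
    M * r ^ 3 ≤ c * r ^ p + M * (M / c) ^ (3 / (p - 3)) := by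
  rcases le_or_gt (M / c) (r ^ (p - 3)) with h | h
  · have hrp : r ^ p = r ^ (p - 3) * r ^ 3 := by
      rw [← Real.rpow_natCast, ← Real.rpow_add' hr (by norm_num; linarith)]
      norm_num
    have : M ≤ c * r ^ (p - 3) := (div_le_iff₀' hc).1 h
    have : 0 ≤ M * (M / c) ^ (3 / (p - 3)) := by positivity
    rw [hrp]
    nlinarith [pow_nonneg hr 3]
  · have hr3 : r ^ 3 = (r ^ (p - 3)) ^ (3 / (p - 3)) := by
      rw [← Real.rpow_mul hr, mul_div_cancel₀ _ (by linarith : p - 3 ≠ 0)]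
      norm_num
    have : r ^ 3 ≤ (M / c) ^ (3 / (p - 3)) := by
      rw [hr3]
      gcongr
    have : 0 ≤ c * r ^ p := by positivity
    nlinarith

theorem rpow_mul_rpow_eq_mul_sq {M c r p : ℝ} (hM : 0 < M) (hc : 0 < c) (hp : 3 < p)
    (hr : 0 < r) :
    c ^ (1 / p) * ((c * r ^ p) ^ (2 / (p - 1)) *
      (M * (M / c) ^ (3 / (p - 3))) ^ ((p - 3) / (p - 1))) ^ (1 - 1 / p) = M * r ^ 2 := by
  apply Real.log_injOn_pos (Set.mem_Ioi.2 (by positivity)) (Set.mem_Ioi.2 (by positivity))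
  have h1 : p - 1 ≠ 0 := by linarith
  have h3 : p - 3 ≠ 0 := by linarith
  have hp0 : p ≠ 0 := by linarith
  have hMc : 0 < M / c := div_pos hM hc
  rw [Real.log_mul (by positivity) (by positivity), Real.log_rpow hc,
    Real.log_rpow (by positivity), Real.log_mul (by positivity) (by positivity),
    Real.log_rpow (by positivity), Real.log_rpow (by positivity),
    Real.log_mul hc.ne' (by positivity), Real.log_mul hM.ne' (by positivity),
    Real.log_rpow hr, Real.log_rpow hMc, Real.log_div hM.ne' hc.ne',
    Real.log_mul hM.ne' (by positivity), Real.log_pow]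
  field_simp
  ring

theorem mul_sq_le_rpow_mul_rpow {M c r p : ℝ} (hM : 0 < M) (hc : 0 < c) (hp : 3 < p)
    (hr : 0 ≤ r) :
    M * r ^ 2 ≤ c ^ (1 / p) *
      (2 / (p - 1) * (c * r ^ p) + (p - 3) / (p - 1) * (M * (M / c) ^ (3 / (p - 3)))) ^
        (1 - 1 / p) := by
  have : 0 < p - 1 := by linarith
  have : 0 < p - 3 := by linarith
  rcases hr.eq_or_lt with rfl | hr
  · have : 0 ≤ M * (M / c) ^ (3 / (p - 3)) := by positivity
    simp only [ne_eq, OfNat.ofNat_ne_zero, not_false_eq_true, zero_pow, mul_zero]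
    positivity
  rw [← rpow_mul_rpow_eq_mul_sq hM hc hp hr]
  have : 1 / p < 1 := (div_lt_one (by linarith)).2 (by linarith)
  gcongr
  exact Real.geom_mean_le_arith_mean2_weighted (by positivity) (by positivity) (by positivity)
    (by positivity) (by field_simp; ring)

theorem mul_rpow_sub_one_eq {c r p : ℝ} (hc : 0 ≤ c) (hr : 0 ≤ r) (hp : p ≠ 0) :
    c * r ^ (p - 1) = c ^ (1 / p) * (c * r ^ p) ^ (1 - 1 / p) := by
  rw [Real.mul_rpow hc (by positivity), ← Real.rpow_mul hr, ← mul_assoc,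
    ← Real.rpow_add' hc (by norm_num), add_sub_cancel, Real.rpow_one, mul_one_sub,
    mul_one_div_cancel hp]

theorem sum_le_rpow_mul_rpow_of_le {ι : Type*} (s : Finset ι) {p A : ℝ} (hp : 1 < p)
    {a w Y : ι → ℝ} (hw : ∀ i ∈ s, 0 ≤ w i) (hY : ∀ i ∈ s, 0 ≤ Y i)
    (ha : ∀ i ∈ s, a i ≤ w i ^ (1 / p) * Y i ^ (1 - 1 / p)) (hYA : ∑ i ∈ s, Y i ≤ A) :
    ∑ i ∈ s, a i ≤ (∑ i ∈ s, w i) ^ (1 / p) * A ^ (1 - 1 / p) := by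
  have hpq : p.HolderConjugate (p / (p - 1)) :=
    (Real.holderConjugate_iff_eq_conjExponent hp).2 rfl
  have hq : 1 / (p / (p - 1)) = 1 - 1 / p := by field_simp
  calc ∑ i ∈ s, a i ≤ ∑ i ∈ s, w i ^ (1 / p) * Y i ^ (1 - 1 / p) := sum_le_sum ha
    _ ≤ (∑ i ∈ s, (w i ^ (1 / p)) ^ p) ^ (1 / p) *
          (∑ i ∈ s, (Y i ^ (1 - 1 / p)) ^ (p / (p - 1))) ^ (1 / (p / (p - 1))) :=
        Real.inner_le_Lp_mul_Lq_of_nonneg s hpq (fun i hi => by have := hw i hi; positivity)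
          (fun i hi => by have := hY i hi; positivity)
    _ = (∑ i ∈ s, w i) ^ (1 / p) * (∑ i ∈ s, Y i) ^ (1 - 1 / p) := by
        have hp0 : p ≠ 0 := by linarith
        have hp1 : p - 1 ≠ 0 := by linarith
        rw [hq]
        congr 2 <;> refine sum_congr rfl fun i hi => ?_
        · rw [← Real.rpow_mul (hw i hi), one_div_mul_cancel hp0, Real.rpow_one]
        · rw [← Real.rpow_mul (hY i hi), ← hq, one_div_mul_cancel (by positivity), Real.rpow_one]
    _ ≤ (∑ i ∈ s, w i) ^ (1 / p) * A ^ (1 - 1 / p) := by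
        have := sum_nonneg hw
        have := sum_nonneg hY
        have : 1 / p < 1 := (div_lt_one (by linarith)).2 hp
        gcongr

theorem sum_mul_sq_add_mul_rpow_sub_one_le {ι : Type*} (s : Finset ι) {M p A : ℝ}
    (hM : 0 < M) (hp : 3 < p) {c r : ι → ℝ} (hc : ∀ i, 0 < c i) (hr : ∀ i, 0 ≤ r i)
    (hpow : ∑ i ∈ s, c i * r i ^ p ≤ A)
    (hQ : M * ∑ i ∈ s, (M / c i) ^ (3 / (p - 3)) ≤ A) :
    ∑ i ∈ s, (M / 2 * r i ^ 2 + 3 * c i / 2 * r i ^ (p - 1)) ≤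
      2 * ((∑ i ∈ s, c i) ^ (1 / p) * A ^ (1 - 1 / p)) := by
  have hp1 : 1 < p := by linarith
  have hp3 : 0 < p - 3 := by linarith
  have hsq : ∑ i ∈ s, M * r i ^ 2 ≤ (∑ i ∈ s, c i) ^ (1 / p) * A ^ (1 - 1 / p) := by
    refine sum_le_rpow_mul_rpow_of_le _ hp1 (fun i _ => (hc i).le) (fun i _ => ?_)
      (fun i _ => mul_sq_le_rpow_mul_rpow hM (hc i) hp (hr i)) ?_
    · have := hc i
      have := hr i
      have : 0 < p - 1 := by linarith
      positivity
    · rw [sum_add_distrib, ← mul_sum, ← mul_sum, ← mul_sum]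
      calc 2 / (p - 1) * ∑ i ∈ s, c i * r i ^ p
            + (p - 3) / (p - 1) * (M * ∑ i ∈ s, (M / c i) ^ (3 / (p - 3)))
          ≤ 2 / (p - 1) * A + (p - 3) / (p - 1) * A := by gcongr
        _ = A := by
          rw [← add_mul, ← add_div, show 2 + (p - 3) = p - 1 by ring,
            div_self (by linarith), one_mul]
  have hrpow : ∑ i ∈ s, c i * r i ^ (p - 1) ≤ (∑ i ∈ s, c i) ^ (1 / p) * A ^ (1 - 1 / p) :=
    sum_le_rpow_mul_rpow_of_le _ hp1 (fun i _ => (hc i).le)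
      (fun i _ => by have := hc i; have := hr i; positivity)
      (fun i _ => (mul_rpow_sub_one_eq (hc i).le (hr i) (by linarith)).le) hpow
  calc ∑ i ∈ s, (M / 2 * r i ^ 2 + 3 * c i / 2 * r i ^ (p - 1))
      = 1 / 2 * ∑ i ∈ s, M * r i ^ 2 + 3 / 2 * ∑ i ∈ s, c i * r i ^ (p - 1) := by
        rw [mul_sum, mul_sum, ← sum_add_distrib]
        exact sum_congr rfl fun i _ => by ring
    _ ≤ 2 * ((∑ i ∈ s, c i) ^ (1 / p) * A ^ (1 - 1 / p)) := by linarith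

theorem sum_mul_norm_rpow_le_of_steps {E : Type*} [NormedAddCommGroup E]
    [InnerProductSpace ℝ E] [CompleteSpace E] {f : E → ℝ} {f' : E → E} {H : E → E →L[ℝ] E}
    {M : ℝ} (hf : ∀ y, HasGradientAt f (f' y) y) (hf' : ∀ y, HasFDerivAt f' (H y) y)
    (hlip : ∀ y z, ‖H y - H z‖ ≤ M * ‖y - z‖) (hM : 0 ≤ M) {p : ℝ} (hp : 3 < p)
    {lam : ℕ → ℝ} (hlam : ∀ k, 0 < lam k) {x s : ℕ → E} (hx : ∀ k, x (k + 1) = x k + s k)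
    (hopt : ∀ k, ‖f' (x k) + H (x k) (s k) + (lam k * ‖s k‖ ^ (p - 2)) • s k‖ ≤
      lam k / 2 * ‖s k‖ ^ (p - 1))
    (hdesc : ∀ k, ⟪f' (x k), s k⟫ ≤ 0) (k : ℕ) :
    ∑ i ∈ range k, lam i * ‖s i‖ ^ p ≤
      12 * (f (x 0) - f (x k)) + 2 * M * ∑ i ∈ range k, (M / lam i) ^ (3 / (p - 3)) := by
  have hstep : ∀ i, lam i * ‖s i‖ ^ p ≤
      12 * (f (x i) - f (x (i + 1))) + 2 * M * (M / lam i) ^ (3 / (p - 3)) := fun i => by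
    have hdecr := image_add_le_of_step hf hf' hlip (by linarith) (hopt i) (hdesc i)
    have hcube := mul_pow_three_le_add hM (hlam i) hp (norm_nonneg (s i))
    rw [← hx i] at hdecr
    linarith
  calc ∑ i ∈ range k, lam i * ‖s i‖ ^ p
      ≤ ∑ i ∈ range k, (12 * (f (x i) - f (x (i + 1))) + 2 * M * (M / lam i) ^ (3 / (p - 3))) :=
        sum_le_sum fun i _ => hstep i
    _ = _ := by rw [sum_add_distrib, ← mul_sum, ← mul_sum, sum_range_sub' (fun i => f (x i))]

/-- General gradient-norm bound for the higher-order regularized Newton method: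
for all `k ≥ 1`, `min_{1 ≤ i ≤ k} ‖∇f(x_i)‖ ≤
(2/k) (∑_{i<k} λ_i)^{1/p} (12Δ + 2M ∑_{i<k} (M/λ_i)^{3/(p-3)})^{1-1/p}`. -/
theorem hor_newton_rate_general
    {E : Type*} [NormedAddCommGroup E] [InnerProductSpace ℝ E] [CompleteSpace E]
    (f : E → ℝ) (f' : E → E) (H : E → E →L[ℝ] E)
    (hf : ∀ y, HasGradientAt f (f' y) y)
    (hf' : ∀ y, HasFDerivAt f' (H y) y)
    (M : ℝ) (hM : 0 < M)
    (hlip : ∀ y z, ‖H y - H z‖ ≤ M * ‖y - z‖)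
    (hbdd : BddBelow (Set.range f))
    (p : ℝ) (hp : 3 < p)
    (lam : ℕ → ℝ) (hlam : ∀ k, 0 < lam k)
    (x s : ℕ → E)
    (hx : ∀ k, x (k + 1) = x k + s k)
    (hopt : ∀ k, ‖f' (x k) + H (x k) (s k) + (lam k * ‖s k‖ ^ (p - 2)) • s k‖ ≤
      lam k / 2 * ‖s k‖ ^ (p - 1))
    (hdesc : ∀ k, (⟪f' (x k), s k⟫) ≤ 0)
    (Δ : ℝ) (hΔ : Δ = f (x 0) - ⨅ y, f y)
    (k : ℕ) (hk : 1 ≤ k) :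
    (Finset.Icc 1 k).inf' (Finset.nonempty_Icc.mpr hk) (fun i => ‖f' (x i)‖) ≤
      2 / (k : ℝ) * (∑ i ∈ Finset.range k, lam i) ^ ((1 : ℝ) / p) *
        (12 * Δ + 2 * M * ∑ i ∈ Finset.range k, (M / lam i) ^ (3 / (p - 3))) ^ (1 - 1 / p) := by
  set G := (Finset.Icc 1 k).inf' (Finset.nonempty_Icc.mpr hk) (fun i => ‖f' (x i)‖)
  set A := 12 * Δ + 2 * M * ∑ i ∈ range k, (M / lam i) ^ (3 / (p - 3))
  have hΔ0 : 0 ≤ Δ := hΔ ▸ sub_nonneg.2 (ciInf_le hbdd (x 0))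
  have hQ : 0 ≤ M * ∑ i ∈ range k, (M / lam i) ^ (3 / (p - 3)) :=
    mul_nonneg hM.le (sum_nonneg fun i _ => Real.rpow_nonneg (div_pos hM (hlam i)).le _)
  have hpow : ∑ i ∈ range k, lam i * ‖s i‖ ^ p ≤ A :=
    (sum_mul_norm_rpow_le_of_steps hf hf' hlip hM.le hp hlam hx hopt hdesc k).trans
      (by linarith [ciInf_le hbdd (x k)])
  have hG : ∀ i ∈ range k, G ≤ M / 2 * ‖s i‖ ^ 2 + 3 * lam i / 2 * ‖s i‖ ^ (p - 1) := by
    intro i hi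
    refine (inf'_le _ (mem_Icc.2 ⟨i.succ_pos, mem_range.1 hi⟩)).trans ?_
    rw [hx i]
    exact norm_gradient_add_le_of_step hf' hlip (by linarith) (hlam i).le (hopt i)
  have hkG : k * G ≤ 2 * ((∑ i ∈ range k, lam i) ^ (1 / p) * A ^ (1 - 1 / p)) := calc
    k * G = ∑ i ∈ range k, G := by rw [sum_const, card_range, nsmul_eq_mul]
    _ ≤ _ := sum_le_sum hG
    _ ≤ _ := sum_mul_sq_add_mul_rpow_sub_one_le _ hM hp hlam (fun i => norm_nonneg _) hpow
        (by linarith)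
  rw [mul_assoc, div_mul_eq_mul_div, le_div_iff₀ (by exact_mod_cast hk), mul_comm]
  exact hkG
end

section
/- Fix an integer K ≥ 1 and set μ_k = c_μ K^{p/2−1} for all 0 ≤ k < K. Then, with C := 2‖F_0‖ + L (L/c_μ)^{2/(p−2)}, one has min_{1 ≤ i ≤ K} ‖∇f(x_i)‖ ≤ (2 c_μ^{1/p} C^{2−1/p})/√K + σC/(2K), where f(x) = ½‖F(x)‖². -/
/-!
Each step is an inexact minimizer of the regularized model `½‖F_k + J_k s‖² + (λ_k/p)‖s‖^p`, and
testing its optimality condition against `s_k` shows that the model residual drops: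
`‖F_k + J_k s_k‖ ≤ ‖F_k‖ - μ‖s_k‖^p`. The Taylor error `L/2 ‖s_k‖²` is absorbed by half of that
gain, up to the constant `L/2 (L/μ)^{2/(p-2)} = L/2 (L/c)^{2/(p-2)} / K`; telescoping over the `K`
steps keeps `‖F_k‖ ≤ C/2` and gives `∑ μ‖s_k‖^p ≤ C`, so some step has `μ‖s_m‖^p ≤ C/K`. At
`x_{m+1}` the gradient `J^* F` splits into the change of the Jacobian, the Taylor remainder and the
residual of the optimality condition, all bounded by powers of `‖s_m‖`, hence by powers of `C/K`.
-/

open Real ContinuousLinearMap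
open scoped RealInnerProductSpace

lemma mul_sq_le_max_mul_rpow {L μ p n : ℝ} (hμ : 0 < μ) (hL : 0 ≤ L) (hp : 2 < p) (hn : 0 ≤ n) :
    L * n ^ 2 ≤ max (μ * n ^ p) (L * (L / μ) ^ (2 / (p - 2))) := by
  rcases le_or_gt L (μ * n ^ (p - 2)) with h | h
  · have hsplit : n ^ p = n ^ (p - 2) * n ^ 2 := by
      rw [← rpow_natCast n 2, ← rpow_add' hn (by norm_num; linarith)]
      norm_num
    refine le_max_of_le_left ?_
    rw [hsplit, ← mul_assoc]
    exact mul_le_mul_of_nonneg_right h (by positivity)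
  · have hsq : n ^ 2 = (n ^ (p - 2)) ^ (2 / (p - 2)) := by
      rw [← rpow_mul hn, mul_div_cancel₀ _ (by linarith : p - 2 ≠ 0)]
      norm_cast
    refine le_max_of_le_right (mul_le_mul_of_nonneg_left ?_ hL)
    rw [hsq]
    refine rpow_le_rpow (by positivity) ?_ (div_nonneg (by norm_num) (by linarith))
    rw [le_div_iff₀ hμ, mul_comm]
    exact h.le

lemma mul_div_mul_rpow_rpow_eq_div {L c K p : ℝ} (hL : 0 ≤ L) (hc : 0 ≤ c) (hK : 0 < K)
    (hp : p ≠ 2) :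
    L * (L / (c * K ^ (p / 2 - 1))) ^ (2 / (p - 2)) = L * (L / c) ^ (2 / (p - 2)) / K := by
  have hexp : (p / 2 - 1) * (2 / (p - 2)) = 1 := by field_simp
  rw [← div_div, div_rpow (div_nonneg hL hc) (by positivity), ← rpow_mul hK.le, hexp, rpow_one,
    mul_div_assoc]

lemma mul_rpow_sub_one_le_rpow_inv {μ n B p : ℝ} (hμ : 0 ≤ μ) (hn : 0 ≤ n) (hp : 1 < p)
    (h : μ * n ^ p ≤ B) : μ * n ^ (p - 1) ≤ (μ * B ^ (p - 1)) ^ p⁻¹ := by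
  have hB : 0 ≤ B := (by positivity : 0 ≤ μ * n ^ p).trans h
  refine (le_rpow_inv_iff_of_pos (by positivity) (by positivity) (by linarith)).2 ?_
  have hpow : (μ * n ^ (p - 1)) ^ p = μ * (μ * n ^ p) ^ (p - 1) := by
    rw [mul_rpow hμ (by positivity), mul_rpow hμ (by positivity), ← rpow_mul hn,
      ← rpow_mul hn, ← mul_assoc, ← rpow_one_add' hμ (by linarith), mul_comm p]
    ring_nf
  rw [hpow]
  gcongr

lemma mul_le_rpow_inv_of_mul_rpow_le {L μ n B p : ℝ} (hL : 0 ≤ L) (hμ : 0 < μ) (hn : 0 ≤ n)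
    (hp : 2 < p) (h : μ * n ^ p ≤ B) (hD : L * (L / μ) ^ (2 / (p - 2)) ≤ B) :
    L * n ≤ (μ * B ^ (p - 1)) ^ p⁻¹ := by
  set D := L * (L / μ) ^ (2 / (p - 2))
  have hLp : L ^ p = μ ^ 2 * D ^ (p - 2) := by
    rw [mul_rpow hL (by positivity), ← rpow_mul (by positivity),
      div_mul_cancel₀ _ (by linarith : p - 2 ≠ 0), rpow_two, div_pow, mul_comm (L ^ (p - 2)),
      ← mul_assoc, mul_div_cancel₀ _ (by positivity), ← rpow_two, ← rpow_add' hL (by linarith)]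
    ring_nf
  have hD0 : 0 ≤ D := by positivity
  have hB : 0 ≤ B := hD0.trans hD
  refine (le_rpow_inv_iff_of_pos (by positivity) (by positivity) (by linarith)).2 ?_
  calc (L * n) ^ p = μ * D ^ (p - 2) * (μ * n ^ p) := by
        rw [mul_rpow hL hn, hLp]; ring
    _ ≤ μ * B ^ (p - 2) * B := by gcongr
    _ = μ * B ^ (p - 1) := by
        rw [mul_assoc, ← rpow_add_one' hB (by linarith)]; ring_nf

lemma mul_rpow_inv_eq_div_sqrt {c C K p : ℝ} (hc : 0 < c) (hC : 0 < C) (hK : 0 < K) (hp : 0 < p) :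
    C * (c * K ^ (p / 2 - 1) * (C / K) ^ (p - 1)) ^ p⁻¹ = c ^ (1 / p) * C ^ (2 - 1 / p) / √K := by
  refine log_injOn_pos (Set.mem_Ioi.2 (by positivity)) (Set.mem_Ioi.2 (by positivity)) ?_
  rw [log_mul, log_rpow, log_mul, log_mul, log_rpow, log_rpow, log_div, log_div, log_mul,
    log_rpow, log_rpow, log_sqrt]
  all_goals try positivity
  field_simp
  ring

lemma norm_sub_sub_le_of_lipschitz_fderiv {E V : Type*} [NormedAddCommGroup E] [NormedSpace ℝ E]
    [NormedAddCommGroup V] [NormedSpace ℝ V] {F : E → V} {J : E → E →L[ℝ] V} {L : ℝ}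
    (hF : ∀ y, HasFDerivAt F (J y) y) (hlip : ∀ y z, ‖J y - J z‖ ≤ L * ‖y - z‖) (a v : E) :
    ‖F (a + v) - F a - J a v‖ ≤ L / 2 * ‖v‖ ^ 2 := by
  set g : ℝ → V := fun t => F (a + t • v) - F a - t • J a v
  have hg : ∀ t : ℝ, HasDerivAt g (J (a + t • v) v - J a v) t := by
    intro t
    have hline : HasDerivAt (fun t : ℝ => a + t • v) v t := by
      simpa using ((hasDerivAt_id t).smul_const v).const_add a
    have h := (((hF _).comp_hasDerivAt t hline).sub_const (F a)).sub
      ((hasDerivAt_id t).smul_const (J a v))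
    rwa [one_smul] at h
  have hbound : ∀ t : ℝ, HasDerivAt (fun t : ℝ => L * ‖v‖ ^ 2 / 2 * t ^ 2) (L * ‖v‖ ^ 2 * t) t :=
    fun t => ((hasDerivAt_pow 2 t).const_mul (L * ‖v‖ ^ 2 / 2)).congr_deriv (by ring)
  have hderiv_le : ∀ t ∈ Set.Ico (0 : ℝ) 1, ‖J (a + t • v) v - J a v‖ ≤ L * ‖v‖ ^ 2 * t := by
    intro t ht
    calc ‖J (a + t • v) v - J a v‖ = ‖(J (a + t • v) - J a) v‖ := rfl
      _ ≤ L * ‖t • v‖ * ‖v‖ := by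
          refine (le_opNorm _ _).trans (mul_le_mul_of_nonneg_right ?_ (norm_nonneg v))
          simpa using hlip (a + t • v) a
      _ = L * ‖v‖ ^ 2 * t := by rw [norm_smul, norm_of_nonneg ht.1]; ring
  have h1 := image_norm_le_of_norm_deriv_right_le_deriv_boundary
    (fun t _ => (hg t).continuousAt.continuousWithinAt) (fun t _ => (hg t).hasDerivWithinAt)
    (by simp [g]) hbound hderiv_le (show (1 : ℝ) ∈ Set.Icc 0 1 by norm_num)
  simpa [g, mul_div_right_comm] using h1

lemma norm_add_le_of_inner_add_le {V : Type*} [NormedAddCommGroup V] [InnerProductSpace ℝ V]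
    {v u : V} {b : ℝ} (hv : 0 < ‖v‖) (h : ⟪v + u, u⟫ ≤ -b) : ‖v + u‖ ≤ ‖v‖ - b / ‖v‖ := by
  have hsq : ‖v + u‖ * ‖v + u‖ ≤ ‖v + u‖ * ‖v‖ - b := by
    have hsplit : ‖v + u‖ * ‖v + u‖ = ⟪v + u, v⟫ + ⟪v + u, u⟫ := by
      rw [← inner_add_right, real_inner_self_eq_norm_mul_norm]
    linarith [real_inner_le_norm (v + u) v]
  rw [le_sub_iff_add_le, ← le_sub_iff_add_le', div_le_iff₀ hv]
  nlinarith [sq_nonneg (‖v‖ - ‖v + u‖)]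

lemma norm_le_of_norm_add_rpow_smul_le {E : Type*} [NormedAddCommGroup E] [NormedSpace ℝ E]
    {g s : E} {p lam : ℝ} (hlam : 0 ≤ lam)
    (h : ‖g + (lam * ‖s‖ ^ (p - 2)) • s‖ ≤ lam / 2 * ‖s‖ ^ (p - 1)) :
    ‖g‖ ≤ 3 / 2 * lam * ‖s‖ ^ (p - 1) := by
  have hnorm : ‖(lam * ‖s‖ ^ (p - 2)) • s‖ ≤ lam * ‖s‖ ^ (p - 1) := by
    rw [norm_smul, norm_of_nonneg (by positivity), mul_assoc]
    gcongr
    rcases (norm_nonneg s).eq_or_lt with hs | hs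
    · rw [← hs, mul_zero]
      positivity
    · rw [← rpow_add_one hs.ne', sub_add]
      norm_num
  linarith [norm_le_add_norm_add g ((lam * ‖s‖ ^ (p - 2)) • s)]

section InexactStep

variable {E V : Type*} [NormedAddCommGroup E] [InnerProductSpace ℝ E] [CompleteSpace E]
  [NormedAddCommGroup V] [InnerProductSpace ℝ V] [CompleteSpace V]
  {A : E →L[ℝ] V} {F : E → V} {J : E → E →L[ℝ] V} {F₀ : V} {x s : E} {L σ μ p lam : ℝ}

lemma inner_add_apply_le_of_inexact_step (hp : p ≠ 0)
    (hopt : ‖adjoint A (F₀ + A s) + (lam * ‖s‖ ^ (p - 2)) • s‖ ≤ lam / 2 * ‖s‖ ^ (p - 1)) :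
    ⟪F₀ + A s, A s⟫ ≤ -(lam / 2 * ‖s‖ ^ p) := by
  have hpow : ‖s‖ ^ (p - 1) * ‖s‖ = ‖s‖ ^ p := by
    rw [← rpow_add_one' (norm_nonneg s) (by simpa using hp), sub_add_cancel]
  have hpow' : ‖s‖ ^ (p - 2) * (‖s‖ * ‖s‖) = ‖s‖ ^ p := by
    rw [← sq, ← rpow_two, ← rpow_add' (norm_nonneg s) (by simpa using hp), sub_add_cancel]
  have hinner : ⟪adjoint A (F₀ + A s) + (lam * ‖s‖ ^ (p - 2)) • s, s⟫ =
      ⟪F₀ + A s, A s⟫ + lam * ‖s‖ ^ p := by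
    rw [inner_add_left, adjoint_inner_left, real_inner_smul_left, real_inner_self_eq_norm_mul_norm,
      mul_assoc, hpow']
  have hle := (real_inner_le_norm _ s).trans (mul_le_mul_of_nonneg_right hopt (norm_nonneg s))
  rw [hinner, mul_assoc, hpow] at hle
  linarith

lemma norm_adjoint_apply_le (A₀ A₁ : E →L[ℝ] V) (F₀ F₁ : V) (s : E) :
    ‖adjoint A₁ F₁‖ ≤
      ‖A₁ - A₀‖ * ‖F₁‖ + ‖A₀‖ * ‖F₁ - F₀ - A₀ s‖ + ‖adjoint A₀ (F₀ + A₀ s)‖ := by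
  have hsplit : adjoint A₁ F₁ =
      adjoint (A₁ - A₀) F₁ + adjoint A₀ (F₁ - F₀ - A₀ s) + adjoint A₀ (F₀ + A₀ s) := by
    simp only [map_sub, map_add, sub_apply]
    abel
  rw [hsplit]
  refine (norm_add₃_le).trans (add_le_add_three ?_ ?_ le_rfl)
  · simpa only [adjoint.norm_map] using (adjoint (A₁ - A₀)).le_opNorm F₁
  · simpa only [adjoint.norm_map] using (adjoint A₀).le_opNorm (F₁ - F₀ - A₀ s)

lemma norm_map_add_add_le_of_inexact_step (hF : ∀ y, HasFDerivAt F (J y) y)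
    (hlip : ∀ y z, ‖J y - J z‖ ≤ L * ‖y - z‖) (hL : 0 ≤ L) (hμ : 0 < μ) (hp : 2 < p)
    (hFx : 0 < ‖F x‖) (hlam : lam = 2 * μ * ‖F x‖)
    (hopt : ‖adjoint (J x) (F x + J x s) + (lam * ‖s‖ ^ (p - 2)) • s‖ ≤ lam / 2 * ‖s‖ ^ (p - 1)) :
    ‖F (x + s)‖ + μ / 2 * ‖s‖ ^ p ≤ ‖F x‖ + L * (L / μ) ^ (2 / (p - 2)) / 2 := by
  have hdecrease : ‖F x + J x s‖ ≤ ‖F x‖ - μ * ‖s‖ ^ p := by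
    have h := norm_add_le_of_inner_add_le hFx
      (inner_add_apply_le_of_inexact_step (by linarith) hopt)
    rwa [hlam, show 2 * μ * ‖F x‖ / 2 * ‖s‖ ^ p / ‖F x‖ = μ * ‖s‖ ^ p by field_simp] at h
  have htaylor := norm_sub_sub_le_of_lipschitz_fderiv hF hlip x s
  have hquad := (mul_sq_le_max_mul_rpow hμ hL hp (norm_nonneg s)).trans
    (max_le_add_of_nonneg (by positivity) (by positivity))
  have htri : ‖F (x + s)‖ ≤ ‖F x + J x s‖ + ‖F (x + s) - F x - J x s‖ := by
    simpa [sub_sub] using norm_le_norm_add_norm_sub' (F (x + s)) (F x + J x s)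
  linarith

lemma norm_adjoint_map_add_le_of_inexact_step (hF : ∀ y, HasFDerivAt F (J y) y)
    (hlip : ∀ y z, ‖J y - J z‖ ≤ L * ‖y - z‖) (hJ : ∀ y, ‖J y‖ ≤ σ) (hμ : 0 ≤ μ)
    (hlam : lam = 2 * μ * ‖F x‖)
    (hopt : ‖adjoint (J x) (F x + J x s) + (lam * ‖s‖ ^ (p - 2)) • s‖ ≤ lam / 2 * ‖s‖ ^ (p - 1)) :
    ‖adjoint (J (x + s)) (F (x + s))‖ ≤
      L * ‖s‖ * ‖F (x + s)‖ + σ * (L / 2 * ‖s‖ ^ 2) + 3 * μ * ‖F x‖ * ‖s‖ ^ (p - 1) := by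
  have hJs : ‖J (x + s) - J x‖ ≤ L * ‖s‖ := by simpa using hlip (x + s) x
  have hres := norm_le_of_norm_add_rpow_smul_le (by rw [hlam]; positivity) hopt
  rw [hlam] at hres
  refine (norm_adjoint_apply_le (J x) (J (x + s)) (F x) (F (x + s)) s).trans ?_
  gcongr
  · exact (norm_nonneg _).trans (hJ x)
  · exact hJ x
  · exact norm_sub_sub_le_of_lipschitz_fderiv hF hlip x s
  · linarith

lemma norm_adjoint_map_add_le_of_small_step {B C : ℝ} (hF : ∀ y, HasFDerivAt F (J y) y)
    (hlip : ∀ y z, ‖J y - J z‖ ≤ L * ‖y - z‖) (hJ : ∀ y, ‖J y‖ ≤ σ) (hL : 0 ≤ L) (hμ : 0 < μ)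
    (hp : 2 < p) (hlam : lam = 2 * μ * ‖F x‖)
    (hopt : ‖adjoint (J x) (F x + J x s) + (lam * ‖s‖ ^ (p - 2)) • s‖ ≤ lam / 2 * ‖s‖ ^ (p - 1))
    (hstep : μ * ‖s‖ ^ p ≤ B) (hDB : L * (L / μ) ^ (2 / (p - 2)) ≤ B)
    (hFx : ‖F x‖ ≤ C / 2) (hFxs : ‖F (x + s)‖ ≤ C / 2) :
    ‖adjoint (J (x + s)) (F (x + s))‖ ≤ 2 * C * (μ * B ^ (p - 1)) ^ p⁻¹ + σ * B / 2 := by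
  set G := (μ * B ^ (p - 1)) ^ p⁻¹
  have hσ : 0 ≤ σ := (norm_nonneg _).trans (hJ x)
  have hB : 0 ≤ B := (by positivity : 0 ≤ μ * ‖s‖ ^ p).trans hstep
  have hC : 0 ≤ C := by linarith [norm_nonneg (F x)]
  have hLs : L * ‖s‖ * ‖F (x + s)‖ ≤ G * (C / 2) :=
    mul_le_mul (mul_le_rpow_inv_of_mul_rpow_le hL hμ (norm_nonneg s) hp hstep hDB) hFxs
      (norm_nonneg _) (by positivity)
  have hLs2 : σ * (L / 2 * ‖s‖ ^ 2) ≤ σ * (B / 2) := by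
    have := (mul_sq_le_max_mul_rpow hμ hL hp (norm_nonneg s)).trans (max_le hstep hDB)
    gcongr
    linarith
  have hμs : 3 * μ * ‖F x‖ * ‖s‖ ^ (p - 1) ≤ 3 * (C / 2) * G := by
    have := mul_rpow_sub_one_le_rpow_inv hμ.le (norm_nonneg s) (by linarith) hstep
    calc 3 * μ * ‖F x‖ * ‖s‖ ^ (p - 1) = 3 * ‖F x‖ * (μ * ‖s‖ ^ (p - 1)) := by ring
      _ ≤ 3 * (C / 2) * G := by gcongr
  linarith [norm_adjoint_map_add_le_of_inexact_step hF hlip hJ hμ.le hlam hopt]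

end InexactStep

lemma add_sum_range_le_of_forall_lt {a b : ℕ → ℝ} {d : ℝ} {K : ℕ} (hd : 0 ≤ d)
    (h : ∀ k < K, a (k + 1) + b k ≤ a k + d) :
    ∀ j ≤ K, a j + ∑ k ∈ Finset.range j, b k ≤ a 0 + K * d := by
  intro j hj
  refine le_trans ?_ (by gcongr : a 0 + j * d ≤ a 0 + K * d)
  induction j with
  | zero => simp
  | succ j ih =>
    rw [Finset.sum_range_succ]
    push_cast
    linarith [ih (by omega), h j (by omega)]

lemma le_and_exists_mul_le_of_forall_lt {a b : ℕ → ℝ} {d : ℝ} {K : ℕ} (hK : 0 < K)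
    (ha : ∀ k, 0 ≤ a k) (hb : ∀ k, 0 ≤ b k) (hd : 0 ≤ d)
    (h : ∀ k < K, a (k + 1) + b k ≤ a k + d) :
    (∀ j ≤ K, a j ≤ a 0 + K * d) ∧ ∃ m < K, K * b m ≤ a 0 + K * d := by
  have htel := add_sum_range_le_of_forall_lt hd h
  refine ⟨fun j hj => ?_, ?_⟩
  · linarith [htel j hj, Finset.sum_nonneg fun k (_ : k ∈ Finset.range j) => hb k]
  · have hK0 : (0 : ℝ) < K := by exact_mod_cast hK
    obtain ⟨m, hm, hbm⟩ := Finset.exists_le_of_sum_le (Finset.nonempty_range_iff.2 hK.ne')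
      (f := b) (g := fun _ => (a 0 + K * d) / K) <| by
        rw [Finset.sum_const, Finset.card_range, nsmul_eq_mul, mul_div_cancel₀ _ hK0.ne']
        linarith [htel K le_rfl, ha K]
    exact ⟨m, Finset.mem_range.1 hm, by rwa [le_div_iff₀ hK0, mul_comm] at hbm⟩

theorem gn_rate_fixed_horizon_general
    {E V : Type*} [NormedAddCommGroup E] [InnerProductSpace ℝ E] [CompleteSpace E]
    [NormedAddCommGroup V] [InnerProductSpace ℝ V] [CompleteSpace V]
    (F : E → V) (J : E → E →L[ℝ] V)
    (hF : ∀ y, HasFDerivAt F (J y) y)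
    (L σ : ℝ) (hL : 0 < L)
    (hlip : ∀ y z, ‖J y - J z‖ ≤ L * ‖y - z‖)
    (hJbdd : ∀ y, ‖J y‖ ≤ σ)
    (p : ℝ) (hp : 2 < p)
    (c : ℝ) (hc : 0 < c)
    (K : ℕ) (hK : 1 ≤ K)
    (mu : ℕ → ℝ)
    (hmudef : ∀ k < K, mu k = c * (K : ℝ) ^ (p / 2 - 1))
    (x s : ℕ → E)
    (hx : ∀ k, x (k + 1) = x k + s k)
    (hFpos : ∀ k, 0 < ‖F (x k)‖)
    (lam : ℕ → ℝ) (hlamdef : ∀ k, lam k = 2 * mu k * ‖F (x k)‖)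
    (hopt : ∀ k,
      ‖ContinuousLinearMap.adjoint (J (x k)) (F (x k) + J (x k) (s k)) +
          (lam k * ‖s k‖ ^ (p - 2)) • s k‖ ≤ lam k / 2 * ‖s k‖ ^ (p - 1))
    (C : ℝ) (hC : C = 2 * ‖F (x 0)‖ + L * (L / c) ^ (2 / (p - 2))) :
    (Finset.Icc 1 K).inf' (Finset.nonempty_Icc.mpr hK)
        (fun i => ‖ContinuousLinearMap.adjoint (J (x i)) (F (x i))‖) ≤
      2 * c ^ ((1 : ℝ) / p) * C ^ (2 - 1 / p) / Real.sqrt K + σ * C / (2 * (K : ℝ)) := by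
  have hK0 : (0 : ℝ) < K := by exact_mod_cast hK
  set μ := c * (K : ℝ) ^ (p / 2 - 1) with hμdef
  set D := L * (L / c) ^ (2 / (p - 2))
  have hμ : 0 < μ := by positivity
  have hDμ : L * (L / μ) ^ (2 / (p - 2)) = D / K :=
    mul_div_mul_rpow_rpow_eq_div hL.le hc.le hK0 (by linarith)
  have hlam : ∀ k < K, lam k = 2 * μ * ‖F (x k)‖ := fun k hk => by rw [hlamdef, hmudef k hk]
  have hdescent : ∀ k < K, ‖F (x (k + 1))‖ + μ / 2 * ‖s k‖ ^ p ≤ ‖F (x k)‖ + D / K / 2 := by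
    intro k hk
    rw [hx, ← hDμ]
    exact norm_map_add_add_le_of_inexact_step hF hlip hL.le hμ hp (hFpos k) (hlam k hk) (hopt k)
  have hKD : ‖F (x 0)‖ + K * (D / K / 2) = C / 2 := by rw [hC]; field_simp
  obtain ⟨hFC, m, hm, hsm⟩ := le_and_exists_mul_le_of_forall_lt (a := fun k => ‖F (x k)‖)
    (by omega) (fun _ => norm_nonneg _) (fun _ => by positivity) (by positivity) hdescent
  simp only [hKD] at hFC hsm
  have hstep : μ * ‖s m‖ ^ p ≤ C / K := by rw [le_div_iff₀ hK0]; linarith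
  have hDB : L * (L / μ) ^ (2 / (p - 2)) ≤ C / K := by
    rw [hDμ]
    gcongr
    linarith [hFpos 0]
  have hgrad := norm_adjoint_map_add_le_of_small_step hF hlip hJbdd hL.le hμ hp (hlam m hm)
    (hopt m) hstep hDB (hFC m hm.le) (hx m ▸ hFC (m + 1) hm)
  rw [← hx] at hgrad
  refine (Finset.inf'_le _ (Finset.mem_Icc.2 ⟨by omega, hm⟩)).trans (hgrad.trans_eq ?_)
  rw [hμdef, mul_assoc 2, mul_rpow_inv_eq_div_sqrt hc (by rw [hC]; positivity) hK0 (by linarith)]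
  ring

/-- Fixed-horizon rate for the higher-order regularized Gauss–Newton method with
`μ_k = c_μ K^{p/2-1}` for `0 ≤ k < K`: with `C := 2‖F_0‖ + L (L/c_μ)^{2/(p-2)}`,
`min_{1 ≤ i ≤ K} ‖∇f(x_i)‖ ≤ 2 c_μ^{1/p} C^{2-1/p}/√K + σC/(2K)`,
where `f(x) = ½‖F(x)‖²` so that `∇f(x) = J(x)ᵀ F(x)`. -/
theorem gn_rate_fixed_horizon
    {E V : Type*} [NormedAddCommGroup E] [InnerProductSpace ℝ E] [CompleteSpace E]
    [NormedAddCommGroup V] [InnerProductSpace ℝ V] [CompleteSpace V]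
    (F : E → V) (J : E → E →L[ℝ] V)
    (hF : ∀ y, HasFDerivAt F (J y) y)
    (L σ : ℝ) (hL : 0 < L) (hσ : 0 < σ)
    (hlip : ∀ y z, ‖J y - J z‖ ≤ L * ‖y - z‖)
    (hJbdd : ∀ y, ‖J y‖ ≤ σ)
    (p : ℝ) (hp : 2 < p)
    (c : ℝ) (hc : 0 < c)
    (K : ℕ) (hK : 1 ≤ K)
    (mu : ℕ → ℝ) (hmu : ∀ k, 0 < mu k)
    (hmudef : ∀ k < K, mu k = c * (K : ℝ) ^ (p / 2 - 1))
    (x s : ℕ → E)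
    (hx : ∀ k, x (k + 1) = x k + s k)
    (hFpos : ∀ k, 0 < ‖F (x k)‖)
    (lam : ℕ → ℝ) (hlamdef : ∀ k, lam k = 2 * mu k * ‖F (x k)‖)
    (hopt : ∀ k,
      ‖ContinuousLinearMap.adjoint (J (x k)) (F (x k) + J (x k) (s k)) +
          (lam k * ‖s k‖ ^ (p - 2)) • s k‖ ≤ lam k / 2 * ‖s k‖ ^ (p - 1))
    (C : ℝ) (hC : C = 2 * ‖F (x 0)‖ + L * (L / c) ^ (2 / (p - 2))) :
    (Finset.Icc 1 K).inf' (Finset.nonempty_Icc.mpr hK)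
        (fun i => ‖ContinuousLinearMap.adjoint (J (x i)) (F (x i))‖) ≤
      2 * c ^ ((1 : ℝ) / p) * C ^ (2 - 1 / p) / Real.sqrt K + σ * C / (2 * (K : ℝ)) :=
  gn_rate_fixed_horizon_general F J hF L σ hL hlip hJbdd p hp c hc K hK mu hmudef x s hx hFpos lam
    hlamdef hopt C hC
end

section
/- For every index i, defining e_i := ‖g_i − ∇f(x_i)‖, the iterates satisfy f(x_{i+1}) − f(x_i) ≤ L‖s_i‖² − λ_i‖s_i‖^p + e_i²/(2L) and ‖∇f(x_i)‖ ≤ λ_i‖s_i‖^{p−1} + e_i. -/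
/-!
The step equation `g = -λ ‖s‖^(p-2) s` gives `‖g‖ = λ ‖s‖^(p-1)` and `⟪g, s⟫ = -λ ‖s‖^p`.
The first bound is then the descent lemma `f(x + s) ≤ f(x) + ⟪∇f(x), s⟫ + L/2 ‖s‖²` with `∇f(x)`
replaced by `g`, the error paid for by Young's inequality; the second is the triangle inequality.
-/

open scoped RealInnerProductSpace

section DescentLemma

variable {E : Type*} [NormedAddCommGroup E] [InnerProductSpace ℝ E] [CompleteSpace E]
  {f : E → ℝ} {f' : E → E} {L : ℝ}

theorem hasDerivAt_apply_add_smul (hf : ∀ y, HasGradientAt f (f' y) y) (x s : E) (t : ℝ) :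
    HasDerivAt (fun t : ℝ => f (x + t • s)) ⟪f' (x + t • s), s⟫ t := by
  have hline : HasDerivAt (fun t : ℝ => x + t • s) s t := by
    simpa using ((hasDerivAt_id t).smul_const s).const_add x
  have := (hf (x + t • s)).hasFDerivAt.comp_hasDerivAt t hline
  simp only [InnerProductSpace.toDual_apply_apply] at this
  exact this

theorem le_add_inner_add_of_lipschitz_gradient (hf : ∀ y, HasGradientAt f (f' y) y)
    (hlip : ∀ y z, ‖f' y - f' z‖ ≤ L * ‖y - z‖) (x s : E) :
    f (x + s) ≤ f x + ⟪f' x, s⟫ + L / 2 * ‖s‖ ^ 2 := by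
  have hφ := hasDerivAt_apply_add_smul hf x s
  have hB (t : ℝ) : HasDerivAt (fun t : ℝ => f x + t * ⟪f' x, s⟫ + L / 2 * t ^ 2 * ‖s‖ ^ 2)
      (⟪f' x, s⟫ + L * t * ‖s‖ ^ 2) t := by
    refine ((((hasDerivAt_id' t).mul_const ⟪f' x, s⟫).const_add (f x)).add
      (((hasDerivAt_pow 2 t).const_mul (L / 2)).mul_const (‖s‖ ^ 2))).congr_deriv ?_
    push_cast
    ring
  have hderiv_le (t : ℝ) (ht : 0 ≤ t) : ⟪f' (x + t • s), s⟫ ≤ ⟪f' x, s⟫ + L * t * ‖s‖ ^ 2 := by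
    have hgrad : ‖f' (x + t • s) - f' x‖ ≤ L * (t * ‖s‖) := by
      simpa [norm_smul, abs_of_nonneg ht] using hlip (x + t • s) x
    calc ⟪f' (x + t • s), s⟫ = ⟪f' x, s⟫ + ⟪f' (x + t • s) - f' x, s⟫ := by
          rw [inner_sub_left]; ring
      _ ≤ ⟪f' x, s⟫ + ‖f' (x + t • s) - f' x‖ * ‖s‖ := by gcongr; exact real_inner_le_norm _ _
      _ ≤ ⟪f' x, s⟫ + L * (t * ‖s‖) * ‖s‖ := by gcongr
      _ = ⟪f' x, s⟫ + L * t * ‖s‖ ^ 2 := by ring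
  have := image_le_of_deriv_right_le_deriv_boundary
    (fun t _ => (hφ t).continuousAt.continuousWithinAt) (fun t _ => (hφ t).hasDerivWithinAt)
    (by simp) (fun t _ => (hB t).continuousAt.continuousWithinAt)
    (fun t _ => (hB t).hasDerivWithinAt) (fun t ht => hderiv_le t ht.1)
    (Set.right_mem_Icc.2 zero_le_one)
  simpa using this

/-- Young's inequality absorbs the error `‖g - ∇f(x)‖` at the price of doubling the quadratic
term of the descent lemma. -/
theorem sub_le_inner_add_of_lipschitz_gradient (hf : ∀ y, HasGradientAt f (f' y) y)
    (hL : 0 < L) (hlip : ∀ y z, ‖f' y - f' z‖ ≤ L * ‖y - z‖) (x s g : E) :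
    f (x + s) - f x ≤ ⟪g, s⟫ + L * ‖s‖ ^ 2 + ‖g - f' x‖ ^ 2 / (2 * L) := by
  set e := ‖g - f' x‖
  have hyoung : e * ‖s‖ ≤ e ^ 2 / (2 * L) + L / 2 * ‖s‖ ^ 2 := by
    have : e ^ 2 / (2 * L) + L / 2 * ‖s‖ ^ 2 - e * ‖s‖ = (e - L * ‖s‖) ^ 2 / (2 * L) := by
      field_simp; ring
    linarith [div_nonneg (sq_nonneg (e - L * ‖s‖)) (by positivity : (0 : ℝ) ≤ 2 * L)]
  have hCS : ⟪f' x - g, s⟫ ≤ e * ‖s‖ := by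
    simpa [e, norm_sub_rev] using real_inner_le_norm (f' x - g) s
  have hsplit : ⟪f' x, s⟫ = ⟪g, s⟫ + ⟪f' x - g, s⟫ := by rw [inner_sub_left]; ring
  linarith [le_add_inner_add_of_lipschitz_gradient hf hlip x s]

end DescentLemma

section RegularizedStep

variable {E : Type*} [NormedAddCommGroup E] [NormedSpace ℝ E] {p lam : ℝ}

noncomputable def regularizedStep (p lam : ℝ) (g : E) : E :=
  open scoped Classical in
  if g = 0 then 0 else -((lam * ‖g‖ ^ (p - 2)) ^ (-(1 : ℝ) / (p - 1))) • g

theorem eq_neg_smul_regularizedStep (hlam : 0 < lam) (hp : p ≠ 1) (g : E) :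
    g = -(lam * ‖regularizedStep p lam g‖ ^ (p - 2)) • regularizedStep p lam g := by
  by_cases hg : g = 0
  · simp [regularizedStep, hg]
  have hA : 0 < lam * ‖g‖ ^ (p - 2) := by positivity
  set t := (lam * ‖g‖ ^ (p - 2)) ^ (-(1 : ℝ) / (p - 1)) with ht_def
  have ht : 0 < t := by positivity
  have htp : t ^ (p - 1) = (lam * ‖g‖ ^ (p - 2))⁻¹ := by
    rw [ht_def, ← Real.rpow_mul hA.le, div_mul_cancel₀ _ (sub_ne_zero.2 hp), Real.rpow_neg_one]
  have hcoef : lam * (t * ‖g‖) ^ (p - 2) * t = 1 := by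
    calc lam * (t * ‖g‖) ^ (p - 2) * t = lam * ‖g‖ ^ (p - 2) * t ^ (p - 2 + 1) := by
          rw [Real.mul_rpow ht.le (norm_nonneg g), Real.rpow_add_one ht.ne']; ring
      _ = 1 := by rw [show p - 2 + 1 = p - 1 by ring, htp, mul_inv_cancel₀ hA.ne']
  have hstep : regularizedStep p lam g = -t • g := by simp [regularizedStep, hg, t]
  rw [hstep, norm_smul, norm_neg, Real.norm_of_nonneg ht.le, smul_smul]
  simp [hcoef]

end RegularizedStep

section PowerScaling

variable {E : Type*} [NormedAddCommGroup E] {p : ℝ}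

theorem norm_smul_rpow_norm_sub_two [NormedSpace ℝ E] (hp : p ≠ 1) (c : ℝ) (s : E) :
    ‖(c * ‖s‖ ^ (p - 2)) • s‖ = |c| * ‖s‖ ^ (p - 1) := by
  rw [norm_smul, norm_mul, Real.norm_eq_abs, Real.norm_of_nonneg (by positivity), mul_assoc,
    ← Real.rpow_add_one' (norm_nonneg s) (by contrapose! hp; linarith)]
  ring_nf

theorem inner_smul_rpow_norm_sub_two [InnerProductSpace ℝ E] (hp : p ≠ 0) (c : ℝ) (s : E) :
    ⟪(c * ‖s‖ ^ (p - 2)) • s, s⟫ = c * ‖s‖ ^ p := by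
  rw [real_inner_smul_left, real_inner_self_eq_norm_sq, mul_assoc, ← Real.rpow_two,
    ← Real.rpow_add' (norm_nonneg s) (by simpa using hp)]
  ring_nf

end PowerScaling

open scoped Classical

/-- One-step bounds for higher-order regularized SGD-type updates with inexact
gradients: with `e_i := ‖g_i - ∇f(x_i)‖`,
`f(x_{i+1}) - f(x_i) ≤ L‖s_i‖² - λ_i‖s_i‖^p + e_i²/(2L)` and
`‖∇f(x_i)‖ ≤ λ_i‖s_i‖^{p-1} + e_i`. -/
theorem hor_sgd_step_bounds
    {E : Type*} [NormedAddCommGroup E] [InnerProductSpace ℝ E] [CompleteSpace E]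
    (f : E → ℝ) (f' : E → E)
    (hf : ∀ y, HasGradientAt f (f' y) y)
    (L : ℝ) (hL : 0 < L)
    (hlip : ∀ y z, ‖f' y - f' z‖ ≤ L * ‖y - z‖)
    (p : ℝ) (hp : 2 < p)
    (lam : ℕ → ℝ) (hlam : ∀ k, 0 < lam k)
    (g : ℕ → E) (x s : ℕ → E)
    (hs : ∀ k, s k = if g k = 0 then 0
      else -((lam k * ‖g k‖ ^ (p - 2)) ^ (-(1 : ℝ) / (p - 1))) • g k)
    (hx : ∀ k, x (k + 1) = x k + s k)
    (i : ℕ) :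
    f (x (i + 1)) - f (x i) ≤
        L * ‖s i‖ ^ 2 - lam i * ‖s i‖ ^ p + ‖g i - f' (x i)‖ ^ 2 / (2 * L) ∧
      ‖f' (x i)‖ ≤ lam i * ‖s i‖ ^ (p - 1) + ‖g i - f' (x i)‖ := by
  have hgs : g i = -(lam i * ‖s i‖ ^ (p - 2)) • s i := by
    rw [hs i]
    exact eq_neg_smul_regularizedStep (hlam i) (by linarith) (g i)
  have hnorm : ‖g i‖ = lam i * ‖s i‖ ^ (p - 1) := by
    rw [hgs, neg_smul, norm_neg, norm_smul_rpow_norm_sub_two (by linarith),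
      abs_of_pos (hlam i)]
  have hinner : ⟪g i, s i⟫ = -(lam i * ‖s i‖ ^ p) := by
    rw [hgs, neg_smul, inner_neg_left, inner_smul_rpow_norm_sub_two (by linarith)]
  constructor
  · have := sub_le_inner_add_of_lipschitz_gradient hf hL hlip (x i) (s i) (g i)
    rw [hx i]
    linarith
  · have := norm_sub_norm_le (f' (x i)) (g i)
    rw [norm_sub_rev] at this
    linarith
end
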